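/- arXiv:0809.4500 — 9 statements merged into one kernel-verified Lean document; each statement's English description precedes it below -/
import Mathlib

section
/- Let L and M be complementary subspaces of ℂ^m (i.e. L + M = ℂ^m and L ∩ M = {0}), and let U ∈ ℂ^{m×p} and V ∈ ℂ^{q×m} be matrices with R(U) = L and N(V) = M. Then the matrix U(VU)†V is idempotent with range L and null space M; that is, U(VU)†V = P_{L,M}. -/
/-!
Put `A = VU`, `X = A†` (so `AXA = A`) and `E = UXV`.
For every `x`, the vector `(EU - U)x` lies in `R(U)` and is killed by `V` (as `A(XA - 1) = 0`),
so it lies in `R(U) ∩ N(V) = 0`; thus `EU = U`. Every vector is `Ua + n` with `Vn = 0`, and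
`VE(Ua + n) = AXAa = Aa = V(Ua + n)`; thus `VE = V`. Now `E² = UX(VE) = E`, `R(U) = R(EU) ⊆ R(E)`
and `N(E) ⊆ N(VE) = N(V)`, the reverse inclusions being clear.
-/

open Matrix

/-- The four Penrose conditions characterizing the Moore-Penrose inverse. -/
def IsMoorePenrose {m n : ℕ} (A : Matrix (Fin m) (Fin n) ℂ)
    (X : Matrix (Fin n) (Fin m) ℂ) : Prop :=
  A * X * A = A ∧ X * A * X = X ∧ (A * X)ᴴ = A * X ∧ (X * A)ᴴ = X * A

/-- The range (column space) of a matrix, as a subspace of Euclidean space. -/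
noncomputable def mrange {m n : ℕ} (A : Matrix (Fin m) (Fin n) ℂ) :
    Submodule ℂ (EuclideanSpace ℂ (Fin m)) :=
  LinearMap.range (Matrix.toEuclideanLin A)

/-- The null space of a matrix, as a subspace of Euclidean space. -/
noncomputable def mker {m n : ℕ} (A : Matrix (Fin m) (Fin n) ℂ) :
    Submodule ℂ (EuclideanSpace ℂ (Fin n)) :=
  LinearMap.ker (Matrix.toEuclideanLin A)

namespace LinearMap

variable {R P E Q : Type*} [Ring R] [AddCommGroup P] [AddCommGroup E] [AddCommGroup Q]
  [Module R P] [Module R E] [Module R Q] {u : P →ₗ[R] E} {v : E →ₗ[R] Q} {x : Q →ₗ[R] P}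

theorem comp_comp_comp_eq_of_disjoint_range_ker
    (hx : (v ∘ₗ u) ∘ₗ x ∘ₗ (v ∘ₗ u) = v ∘ₗ u) (h : Disjoint (range u) (ker v)) :
    u ∘ₗ x ∘ₗ v ∘ₗ u = u := by
  ext a
  have hmem : u (x (v (u a))) - u a ∈ range u ⊓ ker v :=
    ⟨sub_mem (mem_range_self u _) (mem_range_self u a), by
      simpa [sub_eq_zero] using LinearMap.congr_fun hx a⟩
  rw [h.eq_bot, Submodule.mem_bot, sub_eq_zero] at hmem
  exact hmem

theorem comp_comp_comp_eq_of_codisjoint_range_ker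
    (hx : (v ∘ₗ u) ∘ₗ x ∘ₗ (v ∘ₗ u) = v ∘ₗ u) (h : Codisjoint (range u) (ker v)) :
    v ∘ₗ u ∘ₗ x ∘ₗ v = v := by
  ext e
  obtain ⟨_, ⟨a, rfl⟩, n, hn, rfl⟩ :=
    Submodule.mem_sup.mp (h.eq_top ▸ Submodule.mem_top : e ∈ range u ⊔ ker v)
  rw [mem_ker] at hn
  simpa [hn] using LinearMap.congr_fun hx a

theorem isIdempotentElem_comp_comp (hv : v ∘ₗ u ∘ₗ x ∘ₗ v = v) :
    IsIdempotentElem (u ∘ₗ x ∘ₗ v) := by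
  change (u ∘ₗ x ∘ₗ v) ∘ₗ u ∘ₗ x ∘ₗ v = u ∘ₗ x ∘ₗ v
  simp only [comp_assoc, hv]

theorem range_comp_comp_eq (hu : u ∘ₗ x ∘ₗ v ∘ₗ u = u) : range (u ∘ₗ x ∘ₗ v) = range u :=
  le_antisymm (range_comp_le_range _ _) <| by
    conv_lhs => rw [← hu]
    exact range_comp_le_range u (u ∘ₗ x ∘ₗ v)

theorem ker_comp_comp_eq (hv : v ∘ₗ u ∘ₗ x ∘ₗ v = v) : ker (u ∘ₗ x ∘ₗ v) = ker v :=
  le_antisymm (by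
    conv_rhs => rw [← hv]
    exact ker_le_ker_comp (u ∘ₗ x ∘ₗ v) v) (ker_le_ker_comp v (u ∘ₗ x))

end LinearMap

open LinearMap

/-- If `L`, `M` are complementary subspaces of `ℂ^m`, `R(U) = L`, `N(V) = M`,
then `U (VU)† V` is idempotent with range `L` and null space `M`, i.e. it equals `P_{L,M}`. -/
theorem stmt0 {m p q : ℕ} (L M : Submodule ℂ (EuclideanSpace ℂ (Fin m)))
    (hsum : L ⊔ M = ⊤) (hint : L ⊓ M = ⊥)
    (U : Matrix (Fin m) (Fin p) ℂ) (V : Matrix (Fin q) (Fin m) ℂ)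
    (hU : mrange U = L) (hV : mker V = M)
    (VUd : Matrix (Fin p) (Fin q) ℂ) (hVUd : IsMoorePenrose (V * U) VUd) :
    (U * VUd * V) * (U * VUd * V) = U * VUd * V ∧
      mrange (U * VUd * V) = L ∧ mker (U * VUd * V) = M := by
  subst hU hV
  have hinner : (toEuclideanLin V ∘ₗ toEuclideanLin U) ∘ₗ toEuclideanLin VUd ∘ₗ
      (toEuclideanLin V ∘ₗ toEuclideanLin U) = toEuclideanLin V ∘ₗ toEuclideanLin U := by
    simpa only [toLpLin_mul_same, comp_assoc] using congrArg toEuclideanLin hVUd.1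
  have hEU := comp_comp_comp_eq_of_disjoint_range_ker hinner (disjoint_iff.mpr hint)
  have hVE := comp_comp_comp_eq_of_codisjoint_range_ker hinner (codisjoint_iff.mpr hsum)
  refine ⟨toEuclideanLin.injective ?_, ?_, ?_⟩
  · simpa only [toLpLin_mul_same, Module.End.mul_eq_comp, comp_assoc] using
      (isIdempotentElem_comp_comp hVE).eq
  · simpa only [mrange, toLpLin_mul_same, comp_assoc] using range_comp_comp_eq hEU
  · simpa only [mker, toLpLin_mul_same, comp_assoc] using ker_comp_comp_eq hVE
end

section
/- Let L and M be complementary subspaces of ℂ^m (i.e. L + M = ℂ^m and L ∩ M = {0}). Then P_{L,M} = P_L (P_{M⊥} P_L)† P_{M⊥} and also P_{L,M} = (P_{M⊥} P_L)†, where M⊥ denotes the orthogonal complement of M. -/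
open Matrix

/-!
Writing `E = P_{L,M}`, `P = P_L` and `Q = P_{M⊥}`, the range and kernel conditions give
`P E = E`, `E P = P`, `Q E = Q` and `E Q = E`. Hence `(Q P) E = Q` and `E (Q P) = P`, both
Hermitian idempotents, so `E` satisfies the four Penrose conditions for `Q P`; by uniqueness of
the Moore-Penrose inverse `(Q P)† = E`, and `P E Q = E`.
-/

section Projectors

variable {m n : ℕ}

theorem mul_eq_right_of_mrange_le {A : Matrix (Fin m) (Fin m) ℂ} {B : Matrix (Fin m) (Fin n) ℂ}
    (hA : IsIdempotentElem A) (h : mrange B ≤ mrange A) : A * B = B := by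
  refine toEuclideanLin.injective (LinearMap.ext fun x => ?_)
  obtain ⟨y, hy⟩ := h (LinearMap.mem_range_self _ x)
  rw [toLpLin_mul_same, LinearMap.comp_apply, ← hy, ← LinearMap.comp_apply,
    ← toLpLin_mul_same, hA.eq]

theorem mul_eq_left_of_mker_le {E : Matrix (Fin n) (Fin n) ℂ} {F : Matrix (Fin m) (Fin n) ℂ}
    (hE : IsIdempotentElem E) (h : mker E ≤ mker F) : F * E = F := by
  refine toEuclideanLin.injective (LinearMap.ext fun x => ?_)
  have hx : toEuclideanLin E x - x ∈ mker E := by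
    rw [mker, LinearMap.mem_ker, map_sub, ← LinearMap.comp_apply, ← toLpLin_mul_same, hE.eq,
      sub_self]
  have hFx := h hx
  rw [mker, LinearMap.mem_ker, map_sub, sub_eq_zero] at hFx
  rw [toLpLin_mul_same, LinearMap.comp_apply, hFx]

theorem mker_eq_orthogonal_mrange {A : Matrix (Fin m) (Fin m) ℂ} (hA : Aᴴ = A) :
    mker A = (mrange A)ᗮ :=
  (LinearMap.IsSymmetric.orthogonal_range (isSymmetric_toEuclideanLin_iff.mpr hA)).symm

end Projectors

theorem IsMoorePenrose.unique {m n : ℕ} {A : Matrix (Fin m) (Fin n) ℂ}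
    {X Y : Matrix (Fin n) (Fin m) ℂ} (hX : IsMoorePenrose A X) (hY : IsMoorePenrose A Y) :
    X = Y := by
  obtain ⟨x1, x2, x3, x4⟩ := hX
  obtain ⟨y1, y2, y3, y4⟩ := hY
  have hAX : A * X = A * Y :=
    calc A * X = (A * Y * (A * X))ᴴ := by rw [← Matrix.mul_assoc, y1, x3]
      _ = A * X * (A * Y) := by rw [conjTranspose_mul, x3, y3]
      _ = A * Y := by rw [← Matrix.mul_assoc, x1]
  have hXA : X * A = Y * A :=
    calc X * A = (X * A * (Y * A))ᴴ := by
          rw [show X * A * (Y * A) = X * (A * Y * A) by simp only [Matrix.mul_assoc], y1, x4]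
      _ = Y * A * (X * A) := by rw [conjTranspose_mul, x4, y4]
      _ = Y * A := by rw [Matrix.mul_assoc, ← Matrix.mul_assoc A, x1]
  calc X = X * A * Y := by rw [Matrix.mul_assoc, ← hAX, ← Matrix.mul_assoc, x2]
    _ = Y := by rw [hXA, y2]

theorem isMoorePenrose_oblique_projector {m : ℕ} {E P Q : Matrix (Fin m) (Fin m) ℂ}
    (hE : IsIdempotentElem E) (hP : IsIdempotentElem P) (hPh : Pᴴ = P)
    (hQ : IsIdempotentElem Q) (hQh : Qᴴ = Q)
    (hrange : mrange P = mrange E) (hker : mker Q = mker E) :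
    IsMoorePenrose (Q * P) E := by
  have hQPE : Q * P * E = Q := by
    rw [mul_assoc, mul_eq_right_of_mrange_le hP hrange.ge,
      mul_eq_left_of_mker_le hE hker.ge]
  have hEQP : E * (Q * P) = P := by
    rw [← mul_assoc, mul_eq_left_of_mker_le hQ hker.le,
      mul_eq_right_of_mrange_le hE hrange.le]
  refine ⟨?_, ?_, ?_, ?_⟩
  · rw [hQPE, ← mul_assoc, hQ.eq]
  · rw [hEQP, mul_eq_right_of_mrange_le hP hrange.ge]
  · rw [hQPE, hQh]
  · rw [hEQP, hPh]

theorem stmt1_general {m : ℕ} (L M : Submodule ℂ (EuclideanSpace ℂ (Fin m)))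
    (PLM : Matrix (Fin m) (Fin m) ℂ)
    (hPLM : PLM * PLM = PLM ∧ mrange PLM = L ∧ mker PLM = M)
    (PL : Matrix (Fin m) (Fin m) ℂ)
    (hPL : PL * PL = PL ∧ PLᴴ = PL ∧ mrange PL = L)
    (PMp : Matrix (Fin m) (Fin m) ℂ)
    (hPMp : PMp * PMp = PMp ∧ PMpᴴ = PMp ∧ mrange PMp = Mᗮ)
    (D : Matrix (Fin m) (Fin m) ℂ) (hD : IsMoorePenrose (PMp * PL) D) :
    PLM = PL * D * PMp ∧ PLM = D := by
  obtain ⟨hE, hEr, hEk⟩ := hPLM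
  obtain ⟨hP, hPh, hPr⟩ := hPL
  obtain ⟨hQ, hQh, hQr⟩ := hPMp
  have hQk : mker PMp = M := by
    rw [mker_eq_orthogonal_mrange hQh, hQr, Submodule.orthogonal_orthogonal]
  have hDE : D = PLM :=
    hD.unique (isMoorePenrose_oblique_projector hE hP hPh hQ hQh (hPr.trans hEr.symm)
      (hQk.trans hEk.symm))
  subst hDE
  refine ⟨?_, rfl⟩
  rw [mul_eq_right_of_mrange_le hP (hEr.trans hPr.symm).le,
    mul_eq_left_of_mker_le hQ (hQk.trans hEk.symm).le]

/-- Greville: For complementary subspaces `L`, `M` of `ℂ^m`, the oblique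
projector `P_{L,M}` satisfies `P_{L,M} = P_L (P_{M⊥} P_L)† P_{M⊥} = (P_{M⊥} P_L)†`, where
`P_L` (resp. `P_{M⊥}`) is the orthogonal projector onto `L` (resp. `M⊥`). -/
theorem stmt1 {m : ℕ} (L M : Submodule ℂ (EuclideanSpace ℂ (Fin m)))
    (hsum : L ⊔ M = ⊤) (hint : L ⊓ M = ⊥)
    (PLM : Matrix (Fin m) (Fin m) ℂ)
    (hPLM : PLM * PLM = PLM ∧ mrange PLM = L ∧ mker PLM = M)
    (PL : Matrix (Fin m) (Fin m) ℂ)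
    (hPL : PL * PL = PL ∧ PLᴴ = PL ∧ mrange PL = L)
    (PMp : Matrix (Fin m) (Fin m) ℂ)
    (hPMp : PMp * PMp = PMp ∧ PMpᴴ = PMp ∧ mrange PMp = Mᗮ)
    (D : Matrix (Fin m) (Fin m) ℂ) (hD : IsMoorePenrose (PMp * PL) D) :
    PLM = PL * D * PMp ∧ PLM = D :=
  stmt1_general L M PLM hPLM PL hPL PMp hPMp D hD
end

section
/- (Zlobec formula) Let A ∈ ℂ^{m×n} and let X be any {1}-inverse of A*AA*, i.e. any matrix satisfying (A*AA*)X(A*AA*) = A*AA*. Then A† = A* X A*. -/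
open Matrix

/-- Zlobec formula: If `X` is any `{1}`-inverse of `A* A A*`, then
`A† = A* X A*`. -/
theorem stmt2 {m n : ℕ} (A : Matrix (Fin m) (Fin n) ℂ)
    (Adag : Matrix (Fin n) (Fin m) ℂ) (hAdag : IsMoorePenrose A Adag)
    (X : Matrix (Fin m) (Fin n) ℂ)
    (hX : (Aᴴ * A * Aᴴ) * X * (Aᴴ * A * Aᴴ) = Aᴴ * A * Aᴴ) :
    Adag = Aᴴ * X * Aᴴ := by
  obtain ⟨h1, h2, h3, h4⟩ := hAdag
  have e3 : Adagᴴ * Aᴴ = A * Adag := by rw [← conjTranspose_mul]; exact h3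
  have e4 : Aᴴ * Adagᴴ = Adag * A := by rw [← conjTranspose_mul]; exact h4
  have hc1 : Aᴴ * (A * Adag) = Aᴴ := by
    have h := congrArg conjTranspose h1
    rw [conjTranspose_mul, h3] at h
    exact h
  have hc2 : Adag * (A * Aᴴ) = Aᴴ := by
    have h := congrArg conjTranspose h1
    rw [Matrix.mul_assoc, conjTranspose_mul, h4, Matrix.mul_assoc] at h
    exact h
  have hc2' : ∀ (k : ℕ) (Y : Matrix (Fin m) (Fin k) ℂ),
      Adag * (A * (Aᴴ * Y)) = Aᴴ * Y := by
    intro k Y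
    rw [← Matrix.mul_assoc, ← Matrix.mul_assoc, Matrix.mul_assoc Adag A, hc2]
  -- step 1: left-multiply hX by Adagᴴ
  have s1 : A * (Aᴴ * (X * (Aᴴ * (A * Aᴴ)))) = A * Aᴴ := by
    have h := congrArg (fun M => Adagᴴ * M) hX
    simp only [Matrix.mul_assoc, ← Matrix.mul_assoc Adagᴴ Aᴴ, e3] at h
    simp only [Matrix.mul_assoc, hc2, hc2'] at h
    exact h
  -- step 2: right-multiply s1 by Adagᴴ * Adag
  have s2 : A * (Aᴴ * (X * Aᴴ)) = A * Adag := by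
    have h := congrArg (fun M => M * (Adagᴴ * Adag)) s1
    have key : Aᴴ * (Adagᴴ * Adag) = Adag := by
      rw [← Matrix.mul_assoc, e4, h2]
    simp only [Matrix.mul_assoc, key, hc1] at h
    exact h
  -- conclude: left-multiply s2 by Adag
  have h := congrArg (fun M => Adag * M) s2
  simp only [hc2'] at h
  rw [show Adag * (A * Adag) = Adag from by rw [← Matrix.mul_assoc, h2]] at h
  rw [← h, Matrix.mul_assoc]
end

section
/- Let Ũ ∈ ℂ^{m×p}, Ṽ ∈ ℂ^{q×m}, and let X be any {1}-inverse of ṼŨ, i.e. any matrix satisfying (ṼŨ)X(ṼŨ) = ṼŨ. Then the matrix E := ŨXṼ is idempotent with range R(Ũ) and null space N(Ṽ) if and only if rank(ṼŨ) = rank(Ṽ) = rank(Ũ). -/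
open Matrix

private lemma tel_mul {a b c : ℕ} (A : Matrix (Fin a) (Fin b) ℂ) (B : Matrix (Fin b) (Fin c) ℂ) :
    Matrix.toEuclideanLin (A * B) = (Matrix.toEuclideanLin A).comp (Matrix.toEuclideanLin B) := by
  simp only [Matrix.toEuclideanLin_eq_toLin]; rw [Matrix.toLin_mul _ (PiLp.basisFun 2 ℂ (Fin b)) _]

private lemma tel_mul_apply {a b c : ℕ} (A : Matrix (Fin a) (Fin b) ℂ)
    (B : Matrix (Fin b) (Fin c) ℂ) (x : EuclideanSpace ℂ (Fin c)) :
    Matrix.toEuclideanLin (A * B) x = Matrix.toEuclideanLin A (Matrix.toEuclideanLin B x) := by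
  rw [tel_mul]; rfl

private lemma rank_tel {a b : ℕ} (A : Matrix (Fin a) (Fin b) ℂ) :
    A.rank = Module.finrank ℂ (LinearMap.range (Matrix.toEuclideanLin A)) := by
  rw [Matrix.toEuclideanLin_eq_toLin]
  exact A.rank_eq_finrank_range_toLin _ _


private lemma mrange_mul_le {a b c : ℕ} (A : Matrix (Fin a) (Fin b) ℂ)
    (B : Matrix (Fin b) (Fin c) ℂ) : mrange (A * B) ≤ mrange A := by
  rw [mrange, mrange, tel_mul]; exact LinearMap.range_comp_le_range _ _

private lemma mker_le_mul {a b c : ℕ} (A : Matrix (Fin a) (Fin b) ℂ)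
    (B : Matrix (Fin b) (Fin c) ℂ) : mker B ≤ mker (A * B) := by
  rw [mker, mker, tel_mul]; exact LinearMap.ker_le_ker_comp _ _

private lemma finrank_mker {a b : ℕ} (A : Matrix (Fin a) (Fin b) ℂ) :
    Module.finrank ℂ (mker A) = b - A.rank := by
  have h := LinearMap.finrank_range_add_finrank_ker (Matrix.toEuclideanLin A)
  rw [finrank_euclideanSpace_fin, ← rank_tel] at h
  unfold mker
  omega

/-- For `Ũ ∈ ℂ^{m×p}`, `Ṽ ∈ ℂ^{q×m}` and `X` a `{1}`-inverse of `ṼŨ`,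
the matrix `E = ŨXṼ` is idempotent with range `R(Ũ)` and null space `N(Ṽ)` if and only if
`rank(ṼŨ) = rank(Ṽ) = rank(Ũ)`. -/
theorem stmt3 {m p q : ℕ} (U : Matrix (Fin m) (Fin p) ℂ) (V : Matrix (Fin q) (Fin m) ℂ)
    (X : Matrix (Fin p) (Fin q) ℂ) (hX : (V * U) * X * (V * U) = V * U) :
    ((U * X * V) * (U * X * V) = U * X * V ∧
        mrange (U * X * V) = mrange U ∧ mker (U * X * V) = mker V) ↔
      ((V * U).rank = V.rank ∧ (V * U).rank = U.rank) := by
  set E := U * X * V with hEdef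
  constructor
  · rintro ⟨hE, hR, hK⟩
    -- E * U = U
    have hEU : E * U = U := by
      apply Matrix.toEuclideanLin.injective
      apply LinearMap.ext; intro x
      rw [tel_mul_apply]
      have hmem : Matrix.toEuclideanLin U x ∈ mrange E := by
        rw [hR]; exact ⟨x, rfl⟩
      obtain ⟨y, hy⟩ := hmem
      rw [← hy, ← tel_mul_apply, hE]
    -- V * E = V
    have hVE : V * E = V := by
      apply Matrix.toEuclideanLin.injective
      apply LinearMap.ext; intro x
      rw [tel_mul_apply]
      have hmem : Matrix.toEuclideanLin E x - x ∈ mker E := by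
        rw [mker, LinearMap.mem_ker, map_sub, ← tel_mul_apply, hE, sub_self]
      rw [hK, mker, LinearMap.mem_ker, map_sub, sub_eq_zero] at hmem
      exact hmem
    constructor
    · -- rank (V*U) = rank V
      refine le_antisymm (Matrix.rank_mul_le_left V U) ?_
      have : V = (V * U) * (X * V) := by
        conv_lhs => rw [← hVE]
        simp only [hEdef, Matrix.mul_assoc]
      calc V.rank = ((V * U) * (X * V)).rank := by rw [← this]
        _ ≤ (V * U).rank := Matrix.rank_mul_le_left _ _
    · -- rank (V*U) = rank U
      refine le_antisymm (Matrix.rank_mul_le_right V U) ?_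
      have : U = (U * X) * (V * U) := by
        conv_lhs => rw [← hEU]
        simp only [hEdef, Matrix.mul_assoc]
      calc U.rank = ((U * X) * (V * U)).rank := by rw [← this]
        _ ≤ (V * U).rank := Matrix.rank_mul_le_right _ _
  · rintro ⟨h1, h2⟩
    -- fact (a): ker (V*U) = ker U
    have hka : mker (V * U) = mker U := by
      refine (Submodule.eq_of_le_of_finrank_eq (mker_le_mul V U) ?_).symm
      rw [finrank_mker, finrank_mker, h2]
    -- fact (b): range (V*U) = range V
    have hrb : mrange (V * U) = mrange V := by
      refine Submodule.eq_of_le_of_finrank_eq (mrange_mul_le V U) ?_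
      rw [mrange, mrange, ← rank_tel, ← rank_tel, h1]
    -- E * U = U
    have hEU : E * U = U := by
      apply Matrix.toEuclideanLin.injective
      apply LinearMap.ext; intro x
      have h3 : Matrix.toEuclideanLin X (Matrix.toEuclideanLin (V * U) x) - x ∈ mker (V * U) := by
        rw [mker, LinearMap.mem_ker, map_sub, ← tel_mul_apply, ← tel_mul_apply, hX, sub_self]
      rw [hka, mker, LinearMap.mem_ker, map_sub, sub_eq_zero] at h3
      have : E * U = U * (X * (V * U)) := by simp only [hEdef, Matrix.mul_assoc]
      rw [this, tel_mul_apply, tel_mul_apply, h3]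
    -- V * E = V
    have hVE : V * E = V := by
      apply Matrix.toEuclideanLin.injective
      apply LinearMap.ext; intro x
      have hmem : Matrix.toEuclideanLin V x ∈ mrange (V * U) := by
        rw [hrb]; exact ⟨x, rfl⟩
      obtain ⟨y, hy⟩ := hmem
      have : V * E = (V * U * X) * V := by simp only [hEdef, Matrix.mul_assoc]
      rw [this, tel_mul_apply, ← hy, ← tel_mul_apply, hX, hy]
    refine ⟨?_, ?_, ?_⟩
    · -- E * E = E
      have : E * E = U * X * (V * E) := by simp only [hEdef, Matrix.mul_assoc]
      rw [this, hVE]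
    · -- mrange E = mrange U
      refine le_antisymm ?_ ?_
      · have : E = U * (X * V) := by simp only [hEdef, Matrix.mul_assoc]
        rw [this]; exact mrange_mul_le _ _
      · conv_lhs => rw [← hEU]
        exact mrange_mul_le _ _
    · -- mker E = mker V
      refine le_antisymm ?_ ?_
      · conv_rhs => rw [← hVE]
        exact mker_le_mul _ _
      · have : E = (U * X) * V := by simp only [hEdef, Matrix.mul_assoc]
        rw [this]; exact mker_le_mul _ _
end

section
/- Let U ∈ ℂ^{m×p} and V ∈ ℂ^{q×m}. The subspaces R(U) and N(V) are complementary in ℂ^m (i.e. R(U) + N(V) = ℂ^m and R(U) ∩ N(V) = {0}) if and only if rank(U) = rank(V) = rank(VU). -/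
open Matrix

/-!
For `f : E → F` and `g : F → G`, rank–nullity for `g` restricted to `R(f)` gives
`rank (g ∘ f) + dim (R(f) ∩ N(g)) = rank f`, while rank–nullity for `g` gives
`rank g + dim N(g) = dim F`. Since `rank (g ∘ f) ≤ rank g`, the intersection vanishes and the
dimensions of `R(f)` and `N(g)` add up to `dim F` exactly when `rank f = rank g = rank (g ∘ f)`.
-/

namespace LinearMap

variable {K E F G : Type*} [DivisionRing K] [AddCommGroup E] [Module K E] [AddCommGroup F]
  [Module K F] [AddCommGroup G] [Module K G] [FiniteDimensional K F]

theorem finrank_range_comp_add_finrank_inf_ker (f : E →ₗ[K] F) (g : F →ₗ[K] G) :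
    Module.finrank K (range (g ∘ₗ f)) + Module.finrank K ↥(range f ⊓ ker g) =
      Module.finrank K (range f) := by
  have h := finrank_range_add_finrank_ker (g.domRestrict (range f))
  rwa [range_domRestrict, ← range_comp, ker_domRestrict,
    ← Submodule.finrank_map_subtype_eq, Submodule.map_comap_subtype] at h

theorem isCompl_range_ker_iff (f : E →ₗ[K] F) (g : F →ₗ[K] G) :
    IsCompl (range f) (ker g) ↔
      Module.finrank K (range f) = Module.finrank K (range g) ∧
        Module.finrank K (range g) = Module.finrank K (range (g ∘ₗ f)) := by
  have hg := finrank_range_add_finrank_ker g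
  have hgf := finrank_range_comp_add_finrank_inf_ker f g
  have hle : Module.finrank K (range (g ∘ₗ f)) ≤ Module.finrank K (range g) :=
    Submodule.finrank_mono (range_comp_le_range f g)
  have hsum := Submodule.finrank_sup_add_finrank_inf_eq (range f) (ker g)
  rw [isCompl_iff, disjoint_iff, codisjoint_iff]
  constructor
  · rintro ⟨hinf, hsup⟩
    rw [hinf, finrank_bot] at hgf hsum
    rw [hsup, finrank_top] at hsum
    omega
  · rintro ⟨hfg, hgc⟩
    have hinf : range f ⊓ ker g = ⊥ := Submodule.finrank_eq_zero.mp (by omega)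
    refine ⟨hinf, Submodule.eq_top_of_finrank_eq ?_⟩
    rw [hinf, finrank_bot] at hsum
    omega

end LinearMap

theorem Matrix.rank_eq_finrank_range_toLpLin {m n R : Type*} [Finite m] [Fintype n]
    [DecidableEq n] [CommRing R] (p q : ENNReal) (A : Matrix m n R) :
    A.rank = Module.finrank R (LinearMap.range (toLpLin p q A)) := by
  rw [toLpLin_eq_toLin p q]
  exact rank_eq_finrank_range_toLin A _ _

/-- `R(U)` and `N(V)` are complementary subspaces of `ℂ^m` if and only if
`rank(U) = rank(V) = rank(VU)`. -/
theorem stmt4 {m p q : ℕ} (U : Matrix (Fin m) (Fin p) ℂ) (V : Matrix (Fin q) (Fin m) ℂ) :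
    (mrange U ⊔ mker V = ⊤ ∧ mrange U ⊓ mker V = ⊥) ↔
      (U.rank = V.rank ∧ V.rank = (V * U).rank) := by
  have h := LinearMap.isCompl_range_ker_iff (toEuclideanLin U) (toEuclideanLin V)
  rw [isCompl_iff, disjoint_iff, codisjoint_iff, and_comm] at h
  rwa [rank_eq_finrank_range_toLpLin 2 2 U, rank_eq_finrank_range_toLpLin 2 2 V,
    rank_eq_finrank_range_toLpLin 2 2 (V * U), toLpLin_mul_same]
end

section
/- A matrix E ∈ ℂ^{m×m} is idempotent (E² = E) if and only if there exist natural numbers p, q and matrices U ∈ ℂ^{m×p}, V ∈ ℂ^{q×m} such that E = U(VU)†V. -/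
/-!
If `X (VU) X = X` then `U X V` is idempotent, since `(UXV)(UXV) = U (X (VU) X) V`.
Conversely an idempotent `E` splits through its range: with `U` the inclusion of `range E`
and `V` the corestriction of `E` to it, `U V = E` and `V U = 1`, and `1` is its own
Moore-Penrose inverse.
-/

open Matrix

theorem LinearMap.rangeRestrict_comp_subtype_of_isIdempotentElem {R M : Type*} [Semiring R]
    [AddCommMonoid M] [Module R M] {f : M →ₗ[R] M} (hf : IsIdempotentElem f) :
    f.rangeRestrict ∘ₗ (LinearMap.range f).subtype = LinearMap.id :=
  LinearMap.ext fun x => Subtype.ext ((LinearMap.IsIdempotentElem.mem_range_iff hf).mp x.2)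

theorem Matrix.exists_splitting_of_isIdempotentElem {K n : Type*} [Field K] [Fintype n]
    [DecidableEq n] {E : Matrix n n K} (hE : IsIdempotentElem E) :
    ∃ (r : ℕ) (U : Matrix n (Fin r) K) (V : Matrix (Fin r) n K), V * U = 1 ∧ U * V = E := by
  let f := Matrix.toLin' E
  have hf : IsIdempotentElem f := hE.map Matrix.toLinAlgEquiv'
  let b := Module.finBasis K (LinearMap.range f)
  let e := Pi.basisFun K n
  refine ⟨_, LinearMap.toMatrix b e (LinearMap.range f).subtype,
    LinearMap.toMatrix e b f.rangeRestrict, ?_, ?_⟩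
  · rw [← LinearMap.toMatrix_comp, LinearMap.rangeRestrict_comp_subtype_of_isIdempotentElem hf,
      LinearMap.toMatrix_id]
  · rw [← LinearMap.toMatrix_comp, LinearMap.subtype_comp_codRestrict,
      LinearMap.toMatrix_eq_toMatrix', LinearMap.toMatrix'_toLin']

theorem IsMoorePenrose.one (p : ℕ) : IsMoorePenrose (1 : Matrix (Fin p) (Fin p) ℂ) 1 := by
  simp [IsMoorePenrose]

theorem Matrix.isIdempotentElem_mul_mul {R l m n : Type*} [Semiring R] [Fintype l] [Fintype m]
    [Fintype n] {U : Matrix l m R} {X : Matrix m n R} {V : Matrix n l R}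
    (hX : X * (V * U) * X = X) : IsIdempotentElem (U * X * V) :=
  calc U * X * V * (U * X * V) = U * (X * (V * U) * X) * V := by simp only [Matrix.mul_assoc]
    _ = U * X * V := by rw [hX]

/-- A matrix `E ∈ ℂ^{m×m}` is idempotent if and only if there exist matrices
`U ∈ ℂ^{m×p}`, `V ∈ ℂ^{q×m}` such that `E = U (VU)† V`. -/
theorem stmt5 {m : ℕ} (E : Matrix (Fin m) (Fin m) ℂ) :
    E * E = E ↔
      ∃ (p q : ℕ) (U : Matrix (Fin m) (Fin p) ℂ) (V : Matrix (Fin q) (Fin m) ℂ)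
        (X : Matrix (Fin p) (Fin q) ℂ), IsMoorePenrose (V * U) X ∧ E = U * X * V := by
  constructor
  · intro hE
    obtain ⟨r, U, V, hVU, hUV⟩ := Matrix.exists_splitting_of_isIdempotentElem hE
    exact ⟨r, r, U, V, 1, hVU ▸ IsMoorePenrose.one r, by rw [Matrix.mul_one, hUV]⟩
  · rintro ⟨p, q, U, V, X, ⟨-, hX, -, -⟩, rfl⟩
    exact Matrix.isIdempotentElem_mul_mul hX
end

section
/- For any two matrices U ∈ ℂ^{m×p} and V ∈ ℂ^{q×m}, the matrix E := U(VU)†V satisfies N(E) = N(U*V*V) = N(UU*V*V). -/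
open Matrix

/-!
With `A = V U`, we have `E = U (X V)` and `X V = (X V) E` (from `X A X = X`), so `N(E) = N(X V)`.
The Penrose equations give `X V = X Xᴴ (Aᴴ V)` and `Aᴴ V = Aᴴ A (X V)`, so
`N(X V) = N(Aᴴ V) = N(Uᴴ Vᴴ V)`. Finally `N(U Uᴴ) = N(Uᴴ)` gives `N(Uᴴ Vᴴ V) = N(U Uᴴ Vᴴ V)`.
-/

lemma mem_mker {m n : ℕ} (A : Matrix (Fin m) (Fin n) ℂ) (x : EuclideanSpace ℂ (Fin n)) :
    x ∈ mker A ↔ A *ᵥ x.ofLp = 0 := by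
  simp [mker, toLpLin_apply]

lemma mker_le_mker_mul_left {l m n : ℕ} (A : Matrix (Fin l) (Fin m) ℂ)
    (B : Matrix (Fin m) (Fin n) ℂ) : mker B ≤ mker (A * B) := fun x hx => by
  rw [mem_mker] at hx ⊢
  rw [← mulVec_mulVec, hx, mulVec_zero]

lemma mker_eq_of_eq_mul_left {a b n : ℕ} {A : Matrix (Fin a) (Fin n) ℂ}
    {B : Matrix (Fin b) (Fin n) ℂ} (C : Matrix (Fin a) (Fin b) ℂ) (D : Matrix (Fin b) (Fin a) ℂ)
    (hA : A = C * B) (hB : B = D * A) : mker A = mker B := by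
  apply le_antisymm
  · rw [hB]; exact mker_le_mker_mul_left D A
  · rw [hA]; exact mker_le_mker_mul_left C B

open scoped ComplexOrder in
lemma mker_mul_conjTranspose_mul {m n p : ℕ} (U : Matrix (Fin m) (Fin p) ℂ)
    (W : Matrix (Fin m) (Fin n) ℂ) : mker (U * Uᴴ * W) = mker (Uᴴ * W) := by
  ext x
  rw [mem_mker, mem_mker]
  simpa using conjTranspose_mul_self_mulVec_eq_zero Uᴴ (W *ᵥ x.ofLp)

namespace IsMoorePenrose

variable {m n : ℕ} {A : Matrix (Fin m) (Fin n) ℂ} {X : Matrix (Fin n) (Fin m) ℂ}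

lemma conjTranspose_mul_mul (h : IsMoorePenrose A X) : Aᴴ * A * X = Aᴴ := by
  obtain ⟨hAXA, -, hAX, -⟩ := h
  conv_rhs => rw [← hAXA, conjTranspose_mul, conjTranspose_mul, ← conjTranspose_mul, hAX]
  simp only [Matrix.mul_assoc]

lemma mul_mul_conjTranspose (h : IsMoorePenrose A X) : X * Xᴴ * Aᴴ = X := by
  obtain ⟨-, hXAX, hAX, -⟩ := h
  rw [Matrix.mul_assoc, ← conjTranspose_mul, hAX, ← Matrix.mul_assoc, hXAX]

end IsMoorePenrose

/-- For any matrices `U ∈ ℂ^{m×p}` and `V ∈ ℂ^{q×m}`, the matrix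
`E = U (VU)† V` satisfies `N(E) = N(U*V*V) = N(UU*V*V)`. -/
theorem stmt9 {m p q : ℕ} (U : Matrix (Fin m) (Fin p) ℂ) (V : Matrix (Fin q) (Fin m) ℂ)
    (X : Matrix (Fin p) (Fin q) ℂ) (hX : IsMoorePenrose (V * U) X) :
    mker (U * X * V) = mker (Uᴴ * Vᴴ * V) ∧
      mker (U * X * V) = mker (U * Uᴴ * Vᴴ * V) := by
  have hE : mker (U * X * V) = mker (X * V) := by
    refine mker_eq_of_eq_mul_left U (X * V) (Matrix.mul_assoc U X V) ?_
    conv_lhs => rw [← hX.2.1]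
    simp only [Matrix.mul_assoc]
  have hXV : mker (X * V) = mker (Uᴴ * Vᴴ * V) := by
    refine mker_eq_of_eq_mul_left (X * Xᴴ) ((V * U)ᴴ * (V * U)) ?_ ?_
    · conv_lhs => rw [← hX.mul_mul_conjTranspose]
      simp only [conjTranspose_mul, Matrix.mul_assoc]
    · rw [← Matrix.mul_assoc, hX.conjTranspose_mul_mul, conjTranspose_mul]
  have hUUV : mker (Uᴴ * Vᴴ * V) = mker (U * Uᴴ * Vᴴ * V) := by
    simpa only [Matrix.mul_assoc] using (mker_mul_conjTranspose_mul U (Vᴴ * V)).symm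
  exact ⟨hE.trans hXV, hE.trans (hXV.trans hUUV)⟩
end

section
/- Let U ∈ ℂ^{m×p} and V ∈ ℂ^{q×m} satisfy R(U) + N(V) = ℂ^m. Then the idempotent E := U(VU)†V satisfies N(E) = N(V) and R(E) = R(UU*V*). -/
open Matrix

/-! With `E = U X V`, the first Penrose condition gives `V E U = V U`, so `V E` and `V` agree on
`R(U)`; both vanish on `N(V)`, hence `V E = V`. Then `E = (U X) V` and `V = V E` give the kernels.
For the ranges, `X = X (V U) X = (V U)ᴴ Xᴴ X` factors `E` through `U Uᴴ Vᴴ`, while the adjoint of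
`V E = V` gives `U Uᴴ Vᴴ = E U Uᴴ Vᴴ`. -/

lemma mrange_le_of_eq_mul {m n k : ℕ} {A : Matrix (Fin m) (Fin n) ℂ}
    {B : Matrix (Fin m) (Fin k) ℂ} {C : Matrix (Fin k) (Fin n) ℂ} (h : A = B * C) :
    mrange A ≤ mrange B := by
  rw [mrange, mrange, h, toLpLin_mul_same]
  exact LinearMap.range_comp_le_range _ _

lemma mker_le_of_eq_mul {m n k : ℕ} {A : Matrix (Fin m) (Fin n) ℂ}
    {B : Matrix (Fin m) (Fin k) ℂ} {C : Matrix (Fin k) (Fin n) ℂ} (h : A = B * C) :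
    mker C ≤ mker A := by
  rw [mker, mker, h, toLpLin_mul_same]
  exact LinearMap.ker_le_ker_comp _ _

lemma eq_of_mul_eq_of_mker_le {m p q r : ℕ} {A B : Matrix (Fin q) (Fin m) ℂ}
    {U : Matrix (Fin m) (Fin p) ℂ} {V : Matrix (Fin r) (Fin m) ℂ}
    (hsum : mrange U ⊔ mker V = ⊤) (hU : A * U = B * U)
    (hA : mker V ≤ mker A) (hB : mker V ≤ mker B) : A = B := by
  refine toEuclideanLin.injective <|
    LinearMap.ext_on_codisjoint (codisjoint_iff.2 hsum) ?_ fun x hx ↦ ?_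
  · rintro _ ⟨y, rfl⟩
    simpa using congr(toEuclideanLin $hU y)
  · rw [LinearMap.mem_ker.1 (hA hx), LinearMap.mem_ker.1 (hB hx)]

namespace IsMoorePenrose

variable {m n : ℕ} {A : Matrix (Fin m) (Fin n) ℂ} {X : Matrix (Fin n) (Fin m) ℂ}

lemma conjTranspose_mul_conjTranspose (hX : IsMoorePenrose A X) : Aᴴ * Xᴴ = X * A := by
  rw [← conjTranspose_mul]
  exact hX.2.2.2

lemma eq_conjTranspose_mul_conjTranspose_mul (hX : IsMoorePenrose A X) : X = Aᴴ * Xᴴ * X := by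
  rw [hX.conjTranspose_mul_conjTranspose]
  exact hX.2.1.symm

end IsMoorePenrose

/-- If `R(U) + N(V) = ℂ^m`, then the idempotent `E = U (VU)† V` satisfies
`N(E) = N(V)` and `R(E) = R(UU*V*)`. -/
theorem stmt13 {m p q : ℕ} (U : Matrix (Fin m) (Fin p) ℂ) (V : Matrix (Fin q) (Fin m) ℂ)
    (hsum : mrange U ⊔ mker V = ⊤)
    (X : Matrix (Fin p) (Fin q) ℂ) (hX : IsMoorePenrose (V * U) X) :
    mker (U * X * V) = mker V ∧ mrange (U * X * V) = mrange (U * Uᴴ * Vᴴ) := by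
  have hVE : V * (U * X * V) = V := by
    refine eq_of_mul_eq_of_mker_le hsum ?_ (mker_le_of_eq_mul (B := V * U * X) ?_) le_rfl
    · simpa only [Matrix.mul_assoc] using hX.1
    · simp only [Matrix.mul_assoc]
  have hE : U * X * V = U * Uᴴ * Vᴴ * (Xᴴ * X * V) := by
    conv_lhs => rw [hX.eq_conjTranspose_mul_conjTranspose_mul]
    simp only [conjTranspose_mul, Matrix.mul_assoc]
  have hUUV : U * Uᴴ * Vᴴ = U * X * V * (U * Uᴴ * Vᴴ) := by
    calc U * Uᴴ * Vᴴ = U * ((V * U)ᴴ * Xᴴ) * (Uᴴ * Vᴴ) := by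
          conv_lhs => rw [← congr(($hVE)ᴴ)]
          simp only [conjTranspose_mul, Matrix.mul_assoc]
      _ = U * X * V * (U * Uᴴ * Vᴴ) := by
          rw [hX.conjTranspose_mul_conjTranspose]
          simp only [Matrix.mul_assoc]
  exact ⟨le_antisymm (mker_le_of_eq_mul hVE.symm) (mker_le_of_eq_mul rfl),
    le_antisymm (mrange_le_of_eq_mul hE) (mrange_le_of_eq_mul hUUV)⟩
end

section
/- Let A₁ ∈ ℂ^{m×n}, b₁ ∈ ℂ^m, A₂ ∈ ℂ^{k×n} with rank(A₂) = k ≥ 1, b₂ ∈ ℂ^k, and set ξ := A₁†b₁ + (I − (A₁(I − A₂†A₂))†A₁)(A₂†b₂ − A₁†b₁). For any y ∈ ℂ^n, define ψ(y) := ξ + P_{N(A₁)∩N(A₂)} y, where P_{N(A₁)∩N(A₂)} is the orthogonal projection onto N(A₁) ∩ N(A₂). Then ψ(y) minimizes ‖A₁x − b₁‖² over all x ∈ ℂ^n satisfying A₂x = b₂, and for every minimizer x of this constrained problem one has ‖ψ(y) − y‖ ≤ ‖x − y‖. -/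
open Matrix

/-!
Since `A₂` has full row rank, `A₂ A₂† = 1`, so the feasible set is `x₀ + N(A₂)` with
`x₀ = A₂† b₂`, and on `N(A₂)` the matrix `A₁` agrees with `B = A₁ (1 - A₂† A₂)`. The Penrose
equations for `A₁†` and `B†` turn `ξ` into `x₀ + B† c` with `c = b₁ - A₁ x₀`, whose residual
`B B† c - c` is orthogonal to the range of `B`. Hence `‖A₁ x - b₁‖² = ‖A₁ (x - ξ)‖² + ‖A₁ ξ - b₁‖²`
for every feasible `x`: `ξ` is a minimizer and every minimizer lies in `ξ + N(A₁) ∩ N(A₂)`.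
Finally `ξ ∈ range A₂† + range B†`, which is orthogonal to `N(A₁) ∩ N(A₂)`, so
`ψ(y) = ξ + P y` is the point of `ξ + N(A₁) ∩ N(A₂)` nearest to `y`.
-/

theorem norm_add_starProjection_sub_le {𝕜 E : Type*} [RCLike 𝕜] [NormedAddCommGroup E]
    [InnerProductSpace 𝕜 E] {K : Submodule 𝕜 E} [K.HasOrthogonalProjection] {ξ x : E}
    (hξ : ξ ∈ Kᗮ) (hx : x - ξ ∈ K) (y : E) : ‖ξ + K.starProjection y - y‖ ≤ ‖x - y‖ := by
  have hproj : K.starProjection (y - ξ) = K.starProjection y := by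
    rw [map_sub, K.starProjection_apply_eq_zero_iff.mpr hξ, sub_zero]
  calc ‖ξ + K.starProjection y - y‖ = ‖(y - ξ) - K.starProjection (y - ξ)‖ := by
        rw [hproj, ← norm_neg]; congr 1; abel
    _ ≤ ‖(y - ξ) - (x - ξ)‖ := by
        rw [K.starProjection_minimal]
        exact ciInf_le (⟨0, Set.forall_mem_range.2 fun _ => norm_nonneg _⟩ : BddBelow _)
          (⟨x - ξ, hx⟩ : K)
    _ = ‖x - y‖ := by rw [sub_sub_sub_cancel_right, norm_sub_rev]

namespace Matrix

theorem toEuclideanLin_mul_apply {𝕜 l m n : Type*} [RCLike 𝕜] [Fintype m] [DecidableEq m]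
    [Fintype n] [DecidableEq n] (A : Matrix l m 𝕜) (B : Matrix m n 𝕜) (v : EuclideanSpace 𝕜 n) :
    toEuclideanLin (A * B) v = toEuclideanLin A (toEuclideanLin B v) := by
  simp

theorem toEuclideanLin_mul_one_sub_mul_apply {m n k : ℕ} (A₁ : Matrix (Fin m) (Fin n) ℂ)
    (A₂d : Matrix (Fin n) (Fin k) ℂ) {A₂ : Matrix (Fin k) (Fin n) ℂ}
    {w : EuclideanSpace ℂ (Fin n)} (hw : toEuclideanLin A₂ w = 0) :
    toEuclideanLin (A₁ * (1 - A₂d * A₂)) w = toEuclideanLin A₁ w := by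
  simp [hw]

end Matrix

namespace IsMoorePenrose

variable {m n : ℕ} {M : Matrix (Fin m) (Fin n) ℂ} {X : Matrix (Fin n) (Fin m) ℂ}

theorem conjTranspose_mul_mul_self (h : IsMoorePenrose M X) : Mᴴ * (M * X) = Mᴴ := by
  rw [← h.2.2.1, ← conjTranspose_mul, h.1]

theorem eq_conjTranspose_mul (h : IsMoorePenrose M X) : X = Mᴴ * (Xᴴ * X) := by
  conv_lhs => rw [← h.2.1, ← h.2.2.2]
  rw [conjTranspose_mul, Matrix.mul_assoc]

theorem eq_mul_conjTranspose (h : IsMoorePenrose M X) : X = X * (Xᴴ * Mᴴ) := by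
  conv_lhs => rw [← h.2.1, Matrix.mul_assoc, ← h.2.2.1]
  rw [conjTranspose_mul]

theorem one_sub_mul_conjTranspose (h : IsMoorePenrose M X) : (1 - X * M)ᴴ = 1 - X * M := by
  rw [conjTranspose_sub, conjTranspose_one, h.2.2.2]

theorem mul_one_sub_mul (h : IsMoorePenrose M X) : M * (1 - X * M) = 0 := by
  rw [Matrix.mul_sub, Matrix.mul_one, ← Matrix.mul_assoc, h.1, sub_self]

theorem mul_eq_zero_of_mul_conjTranspose_eq_zero {p : ℕ} {N : Matrix (Fin p) (Fin n) ℂ}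
    (h : IsMoorePenrose M X) (hN : N * Mᴴ = 0) : N * X = 0 := by
  rw [h.eq_conjTranspose_mul, ← Matrix.mul_assoc, hN, Matrix.zero_mul]

theorem mul_eq_self_of_conjTranspose_mul_eq {E : Matrix (Fin m) (Fin m) ℂ}
    (h : IsMoorePenrose M X) (hE : Eᴴ * M = M) : X * E = X := by
  have hE' : Mᴴ * E = Mᴴ := by simpa using congrArg conjTranspose hE
  calc X * E = X * (Xᴴ * Mᴴ) * E := by rw [← h.eq_mul_conjTranspose]
    _ = X * (Xᴴ * (Mᴴ * E)) := by simp only [Matrix.mul_assoc]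
    _ = X := by rw [hE', ← h.eq_mul_conjTranspose]

theorem mul_eq_one_of_rank_eq (h : IsMoorePenrose M X) (hM : M.rank = m) : M * X = 1 := by
  have hsurj : Function.Surjective M.mulVecLin := by
    refine LinearMap.range_eq_top.mp (Submodule.eq_top_of_finrank_eq ?_)
    simpa [Matrix.rank] using hM
  refine Matrix.toLin'.injective (LinearMap.ext fun v => ?_)
  obtain ⟨u, rfl⟩ := hsurj v
  simp [Matrix.mulVec_mulVec, ← Matrix.mul_assoc, h.1]

theorem mrange_le_orthogonal_mker (h : IsMoorePenrose M X) : mrange X ≤ (mker M)ᗮ := by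
  rintro _ ⟨u, rfl⟩ v hv
  rw [h.eq_conjTranspose_mul, toEuclideanLin_mul_apply, toEuclideanLin_conjTranspose_eq_adjoint,
    LinearMap.adjoint_inner_right, LinearMap.mem_ker.mp hv, inner_zero_left]

theorem inner_apply_apply_sub_eq_zero (h : IsMoorePenrose M X) (w : EuclideanSpace ℂ (Fin n))
    (c : EuclideanSpace ℂ (Fin m)) :
    inner ℂ (toEuclideanLin M w) (toEuclideanLin M (toEuclideanLin X c) - c) = 0 := by
  rw [← LinearMap.adjoint_inner_right, ← toEuclideanLin_conjTranspose_eq_adjoint, map_sub,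
    ← toEuclideanLin_mul_apply, ← toEuclideanLin_mul_apply, Matrix.mul_assoc,
    h.conjTranspose_mul_mul_self, sub_self, inner_zero_right]

theorem mul_eq_zero_of_mul_one_sub {k : ℕ} {A₁ : Matrix (Fin k) (Fin n) ℂ}
    {G : Matrix (Fin n) (Fin k) ℂ} (h : IsMoorePenrose M X)
    (hG : IsMoorePenrose (A₁ * (1 - X * M)) G) : M * G = 0 :=
  hG.mul_eq_zero_of_mul_conjTranspose_eq_zero <| by
    rw [conjTranspose_mul, h.one_sub_mul_conjTranspose, ← Matrix.mul_assoc, h.mul_one_sub_mul,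
      Matrix.zero_mul]

end IsMoorePenrose

/-- With `G = (A₁ (1 - A₂† A₂))†`, this is `x₀ + G (b₁ - A₁ x₀)` for the feasible point
`x₀ = A₂† b₂`. -/
noncomputable def constrainedLeastSquaresSol {m n k : ℕ} (A₁ : Matrix (Fin m) (Fin n) ℂ)
    (A₂d : Matrix (Fin n) (Fin k) ℂ) (G : Matrix (Fin n) (Fin m) ℂ)
    (b₁ : EuclideanSpace ℂ (Fin m)) (b₂ : EuclideanSpace ℂ (Fin k)) : EuclideanSpace ℂ (Fin n) :=
  toEuclideanLin A₂d b₂ + toEuclideanLin G (b₁ - toEuclideanLin A₁ (toEuclideanLin A₂d b₂))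

section ConstrainedLeastSquares

variable {m n k : ℕ} {A₁ : Matrix (Fin m) (Fin n) ℂ} {A₂ : Matrix (Fin k) (Fin n) ℂ}
  {A₂d : Matrix (Fin n) (Fin k) ℂ} {G : Matrix (Fin n) (Fin m) ℂ}
  (b₁ : EuclideanSpace ℂ (Fin m)) (b₂ : EuclideanSpace ℂ (Fin k))

theorem apply_constrainedLeastSquaresSol (h₂ : IsMoorePenrose A₂ A₂d) (hA₂ : A₂ * A₂d = 1)
    (hG : IsMoorePenrose (A₁ * (1 - A₂d * A₂)) G) :
    toEuclideanLin A₂ (constrainedLeastSquaresSol A₁ A₂d G b₁ b₂) = b₂ := by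
  rw [constrainedLeastSquaresSol, map_add, ← toEuclideanLin_mul_apply, ← toEuclideanLin_mul_apply,
    hA₂, h₂.mul_eq_zero_of_mul_one_sub hG]
  simp

theorem norm_sq_apply_sub_eq (h₂ : IsMoorePenrose A₂ A₂d) (hA₂ : A₂ * A₂d = 1)
    (hG : IsMoorePenrose (A₁ * (1 - A₂d * A₂)) G) {x : EuclideanSpace ℂ (Fin n)}
    (hx : toEuclideanLin A₂ x = b₂) :
    ‖toEuclideanLin A₁ x - b₁‖ ^ 2 =
      ‖toEuclideanLin A₁ (x - constrainedLeastSquaresSol A₁ A₂d G b₁ b₂)‖ ^ 2 +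
      ‖toEuclideanLin A₁ (constrainedLeastSquaresSol A₁ A₂d G b₁ b₂) - b₁‖ ^ 2 := by
  set ξ := constrainedLeastSquaresSol A₁ A₂d G b₁ b₂
  set c := b₁ - toEuclideanLin A₁ (toEuclideanLin A₂d b₂)
  have hGc : toEuclideanLin A₂ (toEuclideanLin G c) = 0 := by
    rw [← toEuclideanLin_mul_apply, h₂.mul_eq_zero_of_mul_one_sub hG, map_zero,
      LinearMap.zero_apply]
  have hxξ : toEuclideanLin A₂ (x - ξ) = 0 := by
    rw [map_sub, hx, apply_constrainedLeastSquaresSol b₁ b₂ h₂ hA₂ hG, sub_self]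
  have hres : toEuclideanLin A₁ ξ - b₁ =
      toEuclideanLin (A₁ * (1 - A₂d * A₂)) (toEuclideanLin G c) - c := by
    rw [toEuclideanLin_mul_one_sub_mul_apply A₁ A₂d hGc]
    simp only [ξ, c, constrainedLeastSquaresSol, map_add]
    abel
  have horth : inner ℂ (toEuclideanLin A₁ (x - ξ)) (toEuclideanLin A₁ ξ - b₁) = 0 := by
    rw [← toEuclideanLin_mul_one_sub_mul_apply A₁ A₂d hxξ, hres]
    exact hG.inner_apply_apply_sub_eq_zero _ _
  rw [← sub_add_sub_cancel (toEuclideanLin A₁ x) (toEuclideanLin A₁ ξ) b₁, ← map_sub,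
    @norm_add_sq ℂ, horth]
  simp

theorem constrainedLeastSquaresSol_mem_orthogonal (h₂ : IsMoorePenrose A₂ A₂d)
    (hG : IsMoorePenrose (A₁ * (1 - A₂d * A₂)) G) :
    constrainedLeastSquaresSol A₁ A₂d G b₁ b₂ ∈ (mker A₁ ⊓ mker A₂)ᗮ := by
  have hker : mker A₁ ⊓ mker A₂ ≤ mker (A₁ * (1 - A₂d * A₂)) := fun w hw => by
    obtain ⟨hw₁, hw₂⟩ := Submodule.mem_inf.mp hw
    rw [mker, LinearMap.mem_ker, toEuclideanLin_mul_one_sub_mul_apply A₁ A₂d hw₂, hw₁]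
  exact add_mem
    (Submodule.orthogonal_le inf_le_right (h₂.mrange_le_orthogonal_mker ⟨b₂, rfl⟩))
    (Submodule.orthogonal_le hker (hG.mrange_le_orthogonal_mker ⟨_, rfl⟩))

theorem constrainedLeastSquaresSol_eq {A₁d : Matrix (Fin n) (Fin m) ℂ}
    (h₁ : IsMoorePenrose A₁ A₁d) (hG : IsMoorePenrose (A₁ * (1 - A₂d * A₂)) G) :
    constrainedLeastSquaresSol A₁ A₂d G b₁ b₂ = toEuclideanLin A₁d b₁ +
      toEuclideanLin (1 - G * A₁) (toEuclideanLin A₂d b₂ - toEuclideanLin A₁d b₁) := by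
  have hGA : G * (A₁ * A₁d) = G := hG.mul_eq_self_of_conjTranspose_mul_eq <| by
    rw [h₁.2.2.1, ← Matrix.mul_assoc, h₁.1]
  have hGAb : toEuclideanLin G (toEuclideanLin A₁ (toEuclideanLin A₁d b₁)) =
      toEuclideanLin G b₁ := by
    rw [← toEuclideanLin_mul_apply, ← toEuclideanLin_mul_apply, Matrix.mul_assoc, hGA]
  simp only [constrainedLeastSquaresSol, map_sub, toLpLin_one, toLpLin_mul_same,
    LinearMap.sub_apply, LinearMap.id_coe, id_eq, LinearMap.coe_comp, Function.comp_apply, hGAb]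
  abel

end ConstrainedLeastSquares

theorem stmt19_general {m n k : ℕ}
    (A₁ : Matrix (Fin m) (Fin n) ℂ) (b₁ : EuclideanSpace ℂ (Fin m))
    (A₂ : Matrix (Fin k) (Fin n) ℂ) (b₂ : EuclideanSpace ℂ (Fin k))
    (hA₂ : A₂.rank = k)
    (A₁d : Matrix (Fin n) (Fin m) ℂ) (hA₁d : IsMoorePenrose A₁ A₁d)
    (A₂d : Matrix (Fin n) (Fin k) ℂ) (hA₂d : IsMoorePenrose A₂ A₂d)
    (G : Matrix (Fin n) (Fin m) ℂ) (hG : IsMoorePenrose (A₁ * (1 - A₂d * A₂)) G)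
    (ξ : EuclideanSpace ℂ (Fin n))
    (hξ : ξ = Matrix.toEuclideanLin A₁d b₁ +
      Matrix.toEuclideanLin (1 - G * A₁)
        (Matrix.toEuclideanLin A₂d b₂ - Matrix.toEuclideanLin A₁d b₁))
    (y ψy : EuclideanSpace ℂ (Fin n))
    (hψy : ψy = ξ + (Submodule.orthogonalProjection (mker A₁ ⊓ mker A₂) y :
      EuclideanSpace ℂ (Fin n))) :
    Matrix.toEuclideanLin A₂ ψy = b₂ ∧
      (∀ x : EuclideanSpace ℂ (Fin n), Matrix.toEuclideanLin A₂ x = b₂ →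
        ‖Matrix.toEuclideanLin A₁ ψy - b₁‖ ^ 2 ≤ ‖Matrix.toEuclideanLin A₁ x - b₁‖ ^ 2) ∧
      ∀ x : EuclideanSpace ℂ (Fin n), Matrix.toEuclideanLin A₂ x = b₂ →
        (∀ x' : EuclideanSpace ℂ (Fin n), Matrix.toEuclideanLin A₂ x' = b₂ →
          ‖Matrix.toEuclideanLin A₁ x - b₁‖ ^ 2 ≤ ‖Matrix.toEuclideanLin A₁ x' - b₁‖ ^ 2) →
        ‖ψy - y‖ ≤ ‖x - y‖ := by
  have hA₂A₂d : A₂ * A₂d = 1 := hA₂d.mul_eq_one_of_rank_eq hA₂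
  rw [← constrainedLeastSquaresSol_eq b₁ b₂ hA₁d hG] at hξ
  have hξ₂ : toEuclideanLin A₂ ξ = b₂ := hξ ▸ apply_constrainedLeastSquaresSol b₁ b₂ hA₂d hA₂A₂d hG
  have hξS : ξ ∈ (mker A₁ ⊓ mker A₂)ᗮ :=
    hξ ▸ constrainedLeastSquaresSol_mem_orthogonal b₁ b₂ hA₂d hG
  have hsplit := fun x (hx : toEuclideanLin A₂ x = b₂) =>
    hξ ▸ norm_sq_apply_sub_eq b₁ b₂ hA₂d hA₂A₂d hG hx
  set S := mker A₁ ⊓ mker A₂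
  have hψ : ψy = ξ + S.starProjection y := hψy
  obtain ⟨hPy₁, hPy₂⟩ := Submodule.mem_inf.mp (S.starProjection_apply_mem y)
  refine ⟨by rw [hψ, map_add, hξ₂, hPy₂, add_zero], fun x hx => ?_, fun x hx hmin => ?_⟩
  · rw [hψ, map_add, hPy₁, add_zero, hsplit x hx]
    exact le_add_of_nonneg_left (sq_nonneg _)
  · have hxξ₁ : toEuclideanLin A₁ (x - ξ) = 0 := by
      have hle := hmin ξ hξ₂
      rw [hsplit x hx] at hle
      simpa using add_le_iff_nonpos_left.mp hle
    have hxξ₂ : toEuclideanLin A₂ (x - ξ) = 0 := by rw [map_sub, hx, hξ₂, sub_self]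
    rw [hψ]
    exact norm_add_starProjection_sub_le hξS (Submodule.mem_inf.mpr ⟨hxξ₁, hxξ₂⟩) y

/-- With `ξ := A₁†b₁ + (I − (A₁(I − A₂†A₂))†A₁)(A₂†b₂ − A₁†b₁)` and
`ψ(y) := ξ + P_{N(A₁)∩N(A₂)} y` (orthogonal projection), `ψ(y)` is a minimizer of
`‖A₁x − b₁‖²` subject to `A₂x = b₂`, and `‖ψ(y) − y‖ ≤ ‖x − y‖` for every minimizer `x`. -/
theorem stmt19 {m n k : ℕ}
    (A₁ : Matrix (Fin m) (Fin n) ℂ) (b₁ : EuclideanSpace ℂ (Fin m))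
    (A₂ : Matrix (Fin k) (Fin n) ℂ) (b₂ : EuclideanSpace ℂ (Fin k))
    (hk : 1 ≤ k) (hA₂ : A₂.rank = k)
    (A₁d : Matrix (Fin n) (Fin m) ℂ) (hA₁d : IsMoorePenrose A₁ A₁d)
    (A₂d : Matrix (Fin n) (Fin k) ℂ) (hA₂d : IsMoorePenrose A₂ A₂d)
    (G : Matrix (Fin n) (Fin m) ℂ) (hG : IsMoorePenrose (A₁ * (1 - A₂d * A₂)) G)
    (ξ : EuclideanSpace ℂ (Fin n))
    (hξ : ξ = Matrix.toEuclideanLin A₁d b₁ +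
      Matrix.toEuclideanLin (1 - G * A₁)
        (Matrix.toEuclideanLin A₂d b₂ - Matrix.toEuclideanLin A₁d b₁))
    (y ψy : EuclideanSpace ℂ (Fin n))
    (hψy : ψy = ξ + (Submodule.orthogonalProjection (mker A₁ ⊓ mker A₂) y :
      EuclideanSpace ℂ (Fin n))) :
    Matrix.toEuclideanLin A₂ ψy = b₂ ∧
      (∀ x : EuclideanSpace ℂ (Fin n), Matrix.toEuclideanLin A₂ x = b₂ →
        ‖Matrix.toEuclideanLin A₁ ψy - b₁‖ ^ 2 ≤ ‖Matrix.toEuclideanLin A₁ x - b₁‖ ^ 2) ∧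
      ∀ x : EuclideanSpace ℂ (Fin n), Matrix.toEuclideanLin A₂ x = b₂ →
        (∀ x' : EuclideanSpace ℂ (Fin n), Matrix.toEuclideanLin A₂ x' = b₂ →
          ‖Matrix.toEuclideanLin A₁ x - b₁‖ ^ 2 ≤ ‖Matrix.toEuclideanLin A₁ x' - b₁‖ ^ 2) →
        ‖ψy - y‖ ≤ ‖x - y‖ :=
  stmt19_general A₁ b₁ A₂ b₂ hA₂ A₁d hA₁d A₂d hA₂d G hG ξ hξ y ψy hψy
end
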